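/- arXiv:1810.06134 — 5 statements merged into one kernel-verified Lean document; each statement's English description precedes it below -/
import Mathlib

section
/- Let H be a complex Hilbert space and let X and B be closed subspaces of H forming a Fredholm pair. Set F := X ∩ B and W := (X + B) ∩ Xᗮ, where Xᗮ is the orthogonal complement of X. Then W is a closed subspace of Xᗮ, and there exists a continuous linear map φ : W → X (with W carrying the subspace topology) such that B = F + {w + φ(w) : w ∈ W} and F ∩ {w + φ(w) : w ∈ W} = {0}; i.e., B is the internal direct sum of the finite-dimensional subspace F and the graph of φ. -/
open Module

/-- A pair `(X, Y)` of closed subspaces of a complex Hilbert (or normed) space `H`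
is a *Fredholm pair* if `X ∩ Y` is finite-dimensional, `X + Y` is closed, and
`H / (X + Y)` is finite-dimensional. -/
def IsFredholmPair {H : Type*} [NormedAddCommGroup H] [NormedSpace ℂ H]
    (X Y : Submodule ℂ H) : Prop :=
  FiniteDimensional ℂ ↥(X ⊓ Y) ∧ IsClosed ((X ⊔ Y : Submodule ℂ H) : Set H) ∧
    FiniteDimensional ℂ (H ⧸ (X ⊔ Y))

/-- The index of a Fredholm pair: `dim (X ∩ Y) - dim (H / (X + Y))`. -/
noncomputable def fpIndex {H : Type*} [NormedAddCommGroup H] [NormedSpace ℂ H]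
    (X Y : Submodule ℂ H) : ℤ :=
  (finrank ℂ ↥(X ⊓ Y) : ℤ) - (finrank ℂ (H ⧸ (X ⊔ Y)) : ℤ)

/-!
Put `C := (X ⊓ B)ᗮ ⊓ B`, so that `B = (X ⊓ B) ⊕ C`, `X ⊓ C = 0` and `X + C = X + B`. The
orthogonal projection onto `Xᗮ` maps `C` injectively onto `(X + C) ⊓ Xᗮ = W`, a closed subspace
because `X + B` is closed. By the bounded inverse theorem its inverse `ψ : W → C` is continuous,
and `C` is the graph of `φ := ψ - id`, which takes values in `X` since `c - P_{Xᗮ} c ∈ X`.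
-/

namespace Submodule

variable {𝕜 E : Type*} [RCLike 𝕜] [NormedAddCommGroup E] [InnerProductSpace 𝕜 E]

theorem sub_starProjection_orthogonal_mem (X : Submodule 𝕜 E) [X.HasOrthogonalProjection]
    (v : E) : v - Xᗮ.starProjection v ∈ X := by
  rw [starProjection_orthogonal_val, sub_sub_cancel]
  exact X.starProjection_apply_mem v

theorem starProjection_orthogonal_mem_sup_inf (X : Submodule 𝕜 E) [X.HasOrthogonalProjection]
    {C : Submodule 𝕜 E} {c : E} (hc : c ∈ C) : Xᗮ.starProjection c ∈ (X ⊔ C) ⊓ Xᗮ := by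
  refine ⟨?_, Xᗮ.starProjection_apply_mem c⟩
  rw [← sub_sub_cancel c (Xᗮ.starProjection c)]
  exact sub_mem (mem_sup_right hc) (mem_sup_left (X.sub_starProjection_orthogonal_mem c))

noncomputable def starProjectionOrthogonalRestrict (X : Submodule 𝕜 E)
    [X.HasOrthogonalProjection] (C : Submodule 𝕜 E) : C →L[𝕜] ↥((X ⊔ C) ⊓ Xᗮ) :=
  (Xᗮ.starProjection ∘L C.subtypeL).codRestrict _ fun c ↦
    X.starProjection_orthogonal_mem_sup_inf c.2

variable (X : Submodule 𝕜 E) [X.HasOrthogonalProjection] (C : Submodule 𝕜 E)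

theorem ker_starProjectionOrthogonalRestrict (hXC : X ⊓ C = ⊥) :
    (X.starProjectionOrthogonalRestrict C).ker = ⊥ := by
  refine LinearMap.ker_eq_bot'.2 fun c hc ↦ ?_
  have hc0 : Xᗮ.starProjection c = 0 := congrArg Subtype.val hc
  have hcX : (c : E) ∈ X := by
    simpa [hc0] using X.sub_starProjection_orthogonal_mem c
  have hcXC : (c : E) ∈ X ⊓ C := ⟨hcX, c.2⟩
  rw [hXC, mem_bot] at hcXC
  exact Subtype.ext hcXC

theorem range_starProjectionOrthogonalRestrict :
    (X.starProjectionOrthogonalRestrict C).range = ⊤ := by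
  refine LinearMap.range_eq_top.2 fun ⟨w, hwXC, hwX⟩ ↦ ?_
  obtain ⟨x, hx, c, hc, rfl⟩ := mem_sup.1 hwXC
  refine ⟨⟨c, hc⟩, Subtype.ext ?_⟩
  have hPx : Xᗮ.starProjection x = 0 :=
    (starProjection_apply_eq_zero_iff _).2 (X.le_orthogonal_orthogonal hx)
  have hPw : Xᗮ.starProjection (x + c) = x + c := starProjection_eq_self_iff.2 hwX
  rwa [map_add, hPx, zero_add] at hPw

theorem exists_continuousLinearMap_range_graph_eq [CompleteSpace E]
    (hC : IsClosed (C : Set E))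
    (hXCc : IsClosed ((X ⊔ C : Submodule 𝕜 E) : Set E)) (hXC : X ⊓ C = ⊥) :
    ∃ φ : ↥((X ⊔ C) ⊓ Xᗮ) →L[𝕜] X,
      LinearMap.range (((X ⊔ C) ⊓ Xᗮ).subtype + X.subtype ∘ₗ (φ : _ →ₗ[𝕜] X)) = C := by
  set W := (X ⊔ C) ⊓ Xᗮ
  have : CompleteSpace C := hC.completeSpace_coe
  have : CompleteSpace W := (hXCc.inter X.isClosed_orthogonal).completeSpace_coe
  let e : C ≃L[𝕜] W := .ofBijective _ (X.ker_starProjectionOrthogonalRestrict C hXC)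
    (X.range_starProjectionOrthogonalRestrict C)
  have he : ∀ w : W, (w : E) = Xᗮ.starProjection (e.symm w) := fun w ↦
    congrArg Subtype.val (e.apply_symm_apply w).symm
  let φ : W →L[𝕜] X := (C.subtypeL ∘L (e.symm : W →L[𝕜] C) - W.subtypeL).codRestrict X
    fun w ↦ by
      change ((e.symm w : C) : E) - w ∈ X
      rw [he w]
      exact X.sub_starProjection_orthogonal_mem _
  have hgraph :
      W.subtype + X.subtype ∘ₗ (φ : W →ₗ[𝕜] X) = C.subtype ∘ₗ (e.symm : W →ₗ[𝕜] C) := by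
    ext w
    simp [φ]
  refine ⟨φ, ?_⟩
  rw [hgraph, LinearMap.range_comp_of_range_eq_top _ e.symm.toLinearEquiv.range, range_subtype]

end Submodule

theorem stmt6 {H : Type*} [NormedAddCommGroup H] [InnerProductSpace ℂ H] [CompleteSpace H]
    (X B : Submodule ℂ H) (hXc : IsClosed (X : Set H)) (hBc : IsClosed (B : Set H))
    (hFP : IsFredholmPair X B)
    (F W : Submodule ℂ H) (hF : F = X ⊓ B) (hW : W = (X ⊔ B) ⊓ Xᗮ) :
    IsClosed (W : Set H) ∧
    ∃ φ : ↥W →L[ℂ] ↥X,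
      B = F ⊔ LinearMap.range (W.subtype + X.subtype ∘ₗ (φ : ↥W →ₗ[ℂ] ↥X)) ∧
      F ⊓ LinearMap.range (W.subtype + X.subtype ∘ₗ (φ : ↥W →ₗ[ℂ] ↥X)) = ⊥ := by
  subst hF hW
  have : FiniteDimensional ℂ ↥(X ⊓ B) := hFP.1
  have : CompleteSpace X := hXc.completeSpace_coe
  set C := (X ⊓ B)ᗮ ⊓ B
  have hBC : X ⊓ B ⊔ C = B :=
    Submodule.sup_orthogonal_inf_of_hasOrthogonalProjection inf_le_right
  have hXC : X ⊔ C = X ⊔ B := by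
    conv_rhs => rw [← hBC, ← sup_assoc, sup_inf_self]
  have hdisj : X ⊓ C = ⊥ := by
    rw [inf_left_comm, inf_comm]
    exact (X ⊓ B).inf_orthogonal_eq_bot
  refine ⟨hFP.2.1.inter X.isClosed_orthogonal, ?_⟩
  obtain ⟨φ, hφ⟩ := X.exists_continuousLinearMap_range_graph_eq C
    ((X ⊓ B).isClosed_orthogonal.inter hBc) (hXC ▸ hFP.2.1) hdisj
  rw [← hXC]
  refine ⟨φ, by rw [hφ, hBC], ?_⟩
  rw [hφ, eq_bot_iff]
  exact le_trans (inf_le_inf_left _ inf_le_left) (X ⊓ B).inf_orthogonal_eq_bot.le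
end

section
/- Let H be a complex Hilbert space, X a closed subspace with orthogonal complement Xᗮ, F a finite-dimensional subspace of X, W a closed subspace of Xᗮ such that the quotient Xᗮ/W is finite-dimensional, and φ : W → X a continuous linear map. Set G := {w + φ(w) : w ∈ W} and B := F + G. Then B is a closed subspace of H, X ∩ B = F, X + B = X + W, the pair (X, B) is a Fredholm pair in H, and ind(X, B) = dim F − dim(Xᗮ/W). In particular, the index is independent of φ, so all the subspaces B_s := F + {w + sφ(w) : w ∈ W}, 0 ≤ s ≤ 1, form Fredholm pairs with X of the same index. -/
/-!
Write `B = F + G` with `G` the graph of `φ` over `W`. Since `W ⊥ X`, a vector `w + φ w` lies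
in `X` only if `w = 0`, so the modular law gives `X ∩ B = F`, while `X + G = X + W` because `φ`
takes values in `X`. Orthogonality also gives `‖w‖ ≤ ‖w + φ w‖`, so `G` is closed and hence so
is `F + G`; and `X + W` is the preimage of `W` under `id - P_X`, hence closed, with
`H / (X + W) ≅ Xᗮ / W`. None of this depends on `φ`, hence neither does the index.
-/

open Module

namespace Submodule

section Module

variable {R M : Type*} [Ring R] [AddCommGroup M] [Module R M]

/-- The graph of `ψ : W → X` inside `M` itself, rather than in `W × X` as `LinearMap.graph`. -/
def embeddedGraph {W X : Submodule R M} (ψ : W →ₗ[R] X) : Submodule R M :=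
  LinearMap.range (W.subtype + X.subtype ∘ₗ ψ)

variable {F W X : Submodule R M}

theorem disjoint_embeddedGraph (hXW : Disjoint X W) (ψ : W →ₗ[R] X) :
    Disjoint X (embeddedGraph ψ) := by
  rw [disjoint_def]
  rintro _ hvX ⟨w, rfl⟩
  have hw : (w : M) ∈ X := by
    simpa using X.sub_mem hvX (ψ w).2
  obtain rfl : w = 0 := Subtype.ext (disjoint_def.mp hXW _ hw w.2)
  simp

theorem sup_embeddedGraph (ψ : W →ₗ[R] X) : X ⊔ embeddedGraph ψ = X ⊔ W := by
  refine le_antisymm (sup_le le_sup_left ?_) (sup_le le_sup_left ?_)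
  · rintro _ ⟨w, rfl⟩
    exact add_mem (mem_sup_right w.2) (mem_sup_left (ψ w).2)
  · intro v hv
    rw [← add_sub_cancel_right v (ψ ⟨v, hv⟩ : M)]
    exact sub_mem (mem_sup_right ⟨⟨v, hv⟩, rfl⟩) (mem_sup_left (ψ ⟨v, hv⟩).2)

theorem inf_sup_embeddedGraph (hFX : F ≤ X) (hXW : Disjoint X W) (ψ : W →ₗ[R] X) :
    X ⊓ (F ⊔ embeddedGraph ψ) = F := by
  rw [inf_comm, sup_inf_assoc_of_le _ hFX, inf_comm, (disjoint_embeddedGraph hXW ψ).eq_bot,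
    sup_bot_eq]

theorem sup_sup_embeddedGraph (hFX : F ≤ X) (ψ : W →ₗ[R] X) :
    X ⊔ (F ⊔ embeddedGraph ψ) = X ⊔ W := by
  rw [← sup_assoc, sup_of_le_left hFX, sup_embeddedGraph]

noncomputable def quotientSupEquivOfIsCompl {Y : Submodule R M} (hXY : IsCompl X Y)
    (hWY : W ≤ Y) : (Y ⧸ W.comap Y.subtype) ≃ₗ[R] M ⧸ (X ⊔ W) := by
  let q : Y →ₗ[R] M ⧸ (X ⊔ W) := (X ⊔ W).mkQ ∘ₗ Y.subtype
  have hq : Function.Surjective q := by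
    intro z
    obtain ⟨v, rfl⟩ := (X ⊔ W).mkQ_surjective z
    obtain ⟨x, hx, y, hy, rfl⟩ := mem_sup.mp (hXY.sup_eq_top ▸ mem_top : v ∈ X ⊔ Y)
    refine ⟨⟨y, hy⟩, (Quotient.eq _).mpr ?_⟩
    simpa using neg_mem (mem_sup_left hx : x ∈ X ⊔ W)
  have hker : LinearMap.ker q = W.comap Y.subtype := by
    have hmod : (X ⊔ W) ⊓ Y = W := by
      rw [sup_comm, sup_inf_assoc_of_le _ hWY, hXY.inf_eq_bot, sup_bot_eq]
    ext y
    simp only [q, LinearMap.mem_ker, LinearMap.comp_apply, mkQ_apply, Quotient.mk_eq_zero,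
      mem_comap, subtype_apply]
    exact ⟨fun hy => hmod.le ⟨hy, y.2⟩, fun hy => mem_sup_right hy⟩
  exact (quotEquivOfEq _ _ hker.symm).trans (q.quotKerEquivOfSurjective hq)

end Module

section InnerProductSpace

variable {𝕜 E : Type*} [RCLike 𝕜] [NormedAddCommGroup E] [InnerProductSpace 𝕜 E]
  {W X : Submodule 𝕜 E}

theorem isClosed_sup_of_le_orthogonal [X.HasOrthogonalProjection] (hWX : W ≤ Xᗮ)
    (hWc : IsClosed (W : Set E)) : IsClosed ((X ⊔ W : Submodule 𝕜 E) : Set E) := by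
  have hpre : ((X ⊔ W : Submodule 𝕜 E) : Set E) = (fun v => v - X.starProjection v) ⁻¹' W := by
    ext v
    refine ⟨fun hv => ?_, fun hv => ?_⟩
    · obtain ⟨x, hx, w, hw, rfl⟩ := mem_sup.mp hv
      simpa [starProjection_eq_self_iff.mpr hx, X.starProjection_apply_eq_zero_iff.mpr (hWX hw)]
        using hw
    · rw [← add_sub_cancel (X.starProjection v) v]
      exact add_mem (mem_sup_left (X.starProjection_apply_mem v)) (mem_sup_right hv)
  rw [hpre]
  exact hWc.preimage (by fun_prop)

theorem isClosed_embeddedGraph [CompleteSpace W] (hWX : W ≤ Xᗮ) (ψ : W →L[𝕜] X) :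
    IsClosed (embeddedGraph (ψ : W →ₗ[𝕜] X) : Set E) := by
  let L : W →L[𝕜] E := W.subtypeL + X.subtypeL ∘L ψ
  have hL : AntilipschitzWith 1 L := L.antilipschitz_of_bound fun w => by
    have h := norm_add_sq_eq_norm_sq_add_norm_sq_of_inner_eq_zero (w : E) (ψ w : E)
      (inner_left_of_mem_orthogonal (ψ w).2 (hWX w.2))
    rw [NNReal.coe_one, one_mul]
    show ‖(w : E)‖ ≤ ‖(w : E) + ψ w‖
    rw [mul_self_le_mul_self_iff (norm_nonneg _) (norm_nonneg _), h]
    exact le_add_of_nonneg_right (mul_self_nonneg _)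
  exact hL.isClosed_range L.uniformContinuous

end InnerProductSpace

end Submodule

section FredholmPair

open Submodule

variable {H : Type*} [NormedAddCommGroup H] [InnerProductSpace ℂ H]
  {F W X : Submodule ℂ H} [X.HasOrthogonalProjection]

theorem isFredholmPair_sup_embeddedGraph (hFX : F ≤ X) [FiniteDimensional ℂ F]
    (hWX : W ≤ Xᗮ) (hWc : IsClosed (W : Set H))
    [FiniteDimensional ℂ (↥Xᗮ ⧸ W.comap Xᗮ.subtype)] (ψ : W →ₗ[ℂ] X) :
    IsFredholmPair X (F ⊔ embeddedGraph ψ) := by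
  rw [IsFredholmPair, inf_sup_embeddedGraph hFX (X.orthogonal_disjoint.mono_right hWX),
    sup_sup_embeddedGraph hFX]
  exact ⟨inferInstance, isClosed_sup_of_le_orthogonal hWX hWc,
    (quotientSupEquivOfIsCompl X.isCompl_orthogonal hWX).finiteDimensional⟩

theorem fpIndex_sup_embeddedGraph (hFX : F ≤ X) (hWX : W ≤ Xᗮ) (ψ : W →ₗ[ℂ] X) :
    fpIndex X (F ⊔ embeddedGraph ψ) =
      (finrank ℂ F : ℤ) - (finrank ℂ (↥Xᗮ ⧸ W.comap Xᗮ.subtype) : ℤ) := by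
  rw [fpIndex, inf_sup_embeddedGraph hFX (X.orthogonal_disjoint.mono_right hWX),
    sup_sup_embeddedGraph hFX,
    (quotientSupEquivOfIsCompl X.isCompl_orthogonal hWX).finrank_eq]

end FredholmPair

theorem stmt7 {H : Type*} [NormedAddCommGroup H] [InnerProductSpace ℂ H] [CompleteSpace H]
    (X : Submodule ℂ H) (hXc : IsClosed (X : Set H))
    (F : Submodule ℂ H) (hFX : F ≤ X) (hFfin : FiniteDimensional ℂ F)
    (W : Submodule ℂ H) (hWX : W ≤ Xᗮ) (hWc : IsClosed (W : Set H))
    (hcofin : FiniteDimensional ℂ (↥Xᗮ ⧸ W.comap Xᗮ.subtype))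
    (φ : ↥W →L[ℂ] ↥X)
    (G B : Submodule ℂ H)
    (hG : G = LinearMap.range (W.subtype + X.subtype ∘ₗ (φ : ↥W →ₗ[ℂ] ↥X)))
    (hB : B = F ⊔ G) :
    IsClosed (B : Set H) ∧ X ⊓ B = F ∧ X ⊔ B = X ⊔ W ∧ IsFredholmPair X B ∧
    fpIndex X B = (finrank ℂ F : ℤ) - (finrank ℂ (↥Xᗮ ⧸ W.comap Xᗮ.subtype) : ℤ) ∧
    ∀ s : ℝ, 0 ≤ s → s ≤ 1 →
      IsFredholmPair X
        (F ⊔ LinearMap.range (W.subtype + X.subtype ∘ₗ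
          (((s : ℂ) • φ : ↥W →L[ℂ] ↥X) : ↥W →ₗ[ℂ] ↥X))) ∧
      fpIndex X
        (F ⊔ LinearMap.range (W.subtype + X.subtype ∘ₗ
          (((s : ℂ) • φ : ↥W →L[ℂ] ↥X) : ↥W →ₗ[ℂ] ↥X)))
        = (finrank ℂ F : ℤ) - (finrank ℂ (↥Xᗮ ⧸ W.comap Xᗮ.subtype) : ℤ) := by
  subst hG hB
  have : CompleteSpace X := hXc.completeSpace_coe
  have : CompleteSpace W := hWc.completeSpace_coe
  refine ⟨?_, Submodule.inf_sup_embeddedGraph hFX (X.orthogonal_disjoint.mono_right hWX) _,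
    Submodule.sup_sup_embeddedGraph hFX _, isFredholmPair_sup_embeddedGraph hFX hWX hWc _,
    fpIndex_sup_embeddedGraph hFX hWX _, fun s _ _ =>
    ⟨isFredholmPair_sup_embeddedGraph hFX hWX hWc _, fpIndex_sup_embeddedGraph hFX hWX _⟩⟩
  rw [sup_comm]
  exact Submodule.isClosed_sup_finiteDimensional _ _ (Submodule.isClosed_embeddedGraph hWX φ)
end

section
/- Let H be a complex Hilbert space, X and Y closed subspaces of H, and let P : H → Xᗮ be the orthogonal projection of H onto the orthogonal complement Xᗮ of X. Then (X, Y) is a Fredholm pair in H if and only if the restriction P|_Y : Y → Xᗮ is a Fredholm operator, and in that case ind(X, Y) = ind(P|_Y) = dim ker(P|_Y) − dim(Xᗮ / range(P|_Y)). -/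
open Module

/-- The orthogonal complement of any subspace of a Hilbert space is closed, hence complete,
hence admits an orthogonal projection. -/
instance orthoHasProj {H : Type*} [NormedAddCommGroup H] [InnerProductSpace ℂ H]
    [CompleteSpace H] (X : Submodule ℂ H) : Submodule.HasOrthogonalProjection Xᗮ :=
  haveI : CompleteSpace ↥Xᗮ := X.isClosed_orthogonal.completeSpace_coe
  Submodule.HasOrthogonalProjection.ofCompleteSpace Xᗮ

/-- A bounded operator between normed spaces is *Fredholm* if its kernel is
finite-dimensional and its range is closed with finite-dimensional cokernel. -/
def IsFredholmOp {E F : Type*} [NormedAddCommGroup E] [NormedSpace ℂ E]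
    [NormedAddCommGroup F] [NormedSpace ℂ F] (T : E →L[ℂ] F) : Prop :=
  FiniteDimensional ℂ (LinearMap.ker (T : E →ₗ[ℂ] F)) ∧
    IsClosed ((LinearMap.range (T : E →ₗ[ℂ] F) : Submodule ℂ F) : Set F) ∧
    FiniteDimensional ℂ (F ⧸ LinearMap.range (T : E →ₗ[ℂ] F))

/-- The index of a Fredholm operator: `dim ker T - dim coker T`. -/
noncomputable def opIndex {E F : Type*} [NormedAddCommGroup E] [NormedSpace ℂ E]
    [NormedAddCommGroup F] [NormedSpace ℂ F] (T : E →L[ℂ] F) : ℤ :=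
  (finrank ℂ (LinearMap.ker (T : E →ₗ[ℂ] F)) : ℤ) - (finrank ℂ (F ⧸ LinearMap.range (T : E →ₗ[ℂ] F)) : ℤ)

/-! The projection `Q : H → Xᗮ` is a continuous surjection with kernel `X` and a continuous
section, the inclusion of `Xᗮ`. For any such `Q : E → F` and any subspace `Y`, with `P = Q|_Y`,
one has `ker P ≅ ker Q ∩ Y` and `ker Q + Y = Q⁻¹(range P)`, hence `E / (ker Q + Y) ≅ F / range P`;
closedness passes between `ker Q + Y` and `range P` by taking preimages under `Q` and under
the section. -/

namespace Submodule

variable {R M N : Type*} [Ring R] [AddCommGroup M] [Module R M] [AddCommGroup N] [Module R N]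

noncomputable def quotientComapEquivOfSurjective (f : M →ₗ[R] N) (hf : Function.Surjective f)
    (q : Submodule R N) : (M ⧸ q.comap f) ≃ₗ[R] N ⧸ q :=
  (quotEquivOfEq _ _ (by rw [LinearMap.ker_comp, ker_mkQ])).trans
    ((q.mkQ ∘ₗ f).quotKerEquivOfSurjective ((mkQ_surjective q).comp hf))

end Submodule

namespace LinearMap

variable {R M N : Type*} [Ring R] [AddCommGroup M] [Module R M] [AddCommGroup N] [Module R N]
  (f : M →ₗ[R] N) (Y : Submodule R M)

def kerCompSubtypeEquivInf : ker (f ∘ₗ Y.subtype) ≃ₗ[R] ↥(ker f ⊓ Y) :=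
  (LinearEquiv.ofEq _ _ (by rw [ker_comp, Submodule.comap_inf, Submodule.comap_subtype_self,
    inf_top_eq])).trans (Submodule.comapSubtypeEquivOfLe inf_le_right)

theorem comap_range_comp_subtype : (range (f ∘ₗ Y.subtype)).comap f = ker f ⊔ Y := by
  rw [range_comp, Submodule.range_subtype, Submodule.comap_map_eq, sup_comm]

noncomputable def quotKerSupEquivQuotRange (hf : Function.Surjective f) :
    (M ⧸ (ker f ⊔ Y)) ≃ₗ[R] N ⧸ range (f ∘ₗ Y.subtype) :=
  (Submodule.quotEquivOfEq _ _ (comap_range_comp_subtype f Y).symm).trans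
    (Submodule.quotientComapEquivOfSurjective f hf _)

end LinearMap

namespace ContinuousLinearMap

theorem isClosed_ker_sup_iff_isClosed_range_comp_subtype {R E F : Type*} [Ring R]
    [TopologicalSpace E] [AddCommGroup E] [Module R E] [TopologicalSpace F] [AddCommGroup F]
    [Module R F] (Q : E →L[R] F) (Y : Submodule R E) {s : F →L[R] E}
    (hs : Function.RightInverse s Q) :
    IsClosed ((LinearMap.ker (Q : E →ₗ[R] F) ⊔ Y : Submodule R E) : Set E) ↔
      IsClosed (LinearMap.range ((Q : E →ₗ[R] F) ∘ₗ Y.subtype) : Set F) := by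
  rw [← LinearMap.comap_range_comp_subtype]
  refine ⟨fun h ↦ ?_, fun h ↦ h.preimage Q.continuous⟩
  have hsection : (LinearMap.range ((Q : E →ₗ[R] F) ∘ₗ Y.subtype) : Set F) =
      s ⁻¹' ((LinearMap.range ((Q : E →ₗ[R] F) ∘ₗ Y.subtype)).comap (Q : E →ₗ[R] F)) := by
    ext w
    simp [hs w]
  rw [hsection]
  exact h.preimage s.continuous

variable {E F : Type*} [NormedAddCommGroup E] [NormedSpace ℂ E]
  [NormedAddCommGroup F] [NormedSpace ℂ F] (Q : E →L[ℂ] F) (Y : Submodule ℂ E)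

theorem isFredholmPair_ker_iff_isFredholmOp_comp_subtypeL {s : F →L[ℂ] E}
    (hs : Function.RightInverse s Q) :
    IsFredholmPair (LinearMap.ker (Q : E →ₗ[ℂ] F)) Y ↔ IsFredholmOp (Q ∘L Y.subtypeL) := by
  simp only [IsFredholmPair, IsFredholmOp, isClosed_ker_sup_iff_isClosed_range_comp_subtype Q Y hs]
  exact and_congr (Module.Finite.equiv_iff (LinearMap.kerCompSubtypeEquivInf _ Y)).symm
    (and_congr_right fun _ ↦
      Module.Finite.equiv_iff (LinearMap.quotKerSupEquivQuotRange _ Y hs.surjective))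

theorem fpIndex_ker_eq_opIndex_comp_subtypeL (hQ : Function.Surjective Q) :
    fpIndex (LinearMap.ker (Q : E →ₗ[ℂ] F)) Y = opIndex (Q ∘L Y.subtypeL) := by
  rw [fpIndex, opIndex, ← (LinearMap.kerCompSubtypeEquivInf (Q : E →ₗ[ℂ] F) Y).finrank_eq,
    (LinearMap.quotKerSupEquivQuotRange (Q : E →ₗ[ℂ] F) Y hQ).finrank_eq]
  rfl

end ContinuousLinearMap

theorem Submodule.ker_orthogonalProjectionOnto_orthogonal {H : Type*} [NormedAddCommGroup H]
    [InnerProductSpace ℂ H] [CompleteSpace H] (X : Submodule ℂ H) :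
    LinearMap.ker (Xᗮ.orthogonalProjectionOnto : H →ₗ[ℂ] ↥Xᗮ) = X.topologicalClosure := by
  rw [← orthogonal_orthogonal_eq_closure]
  exact ker_orthogonalProjectionOnto

theorem stmt9_general {H : Type*} [NormedAddCommGroup H] [InnerProductSpace ℂ H] [CompleteSpace H]
    (X Y : Submodule ℂ H) (hXc : IsClosed (X : Set H))
    (P : ↥Y →L[ℂ] ↥Xᗮ) (hP : P = (Submodule.orthogonalProjectionOnto Xᗮ).comp Y.subtypeL) :
    (IsFredholmPair X Y ↔ IsFredholmOp P) ∧
    (IsFredholmPair X Y →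
      fpIndex X Y = opIndex P ∧
      opIndex P = (finrank ℂ (LinearMap.ker (P : ↥Y →ₗ[ℂ] ↥Xᗮ)) : ℤ) -
        (finrank ℂ (↥Xᗮ ⧸ LinearMap.range (P : ↥Y →ₗ[ℂ] ↥Xᗮ)) : ℤ)) := by
  set Q := Xᗮ.orthogonalProjectionOnto
  have hker : LinearMap.ker (Q : H →ₗ[ℂ] ↥Xᗮ) = X := by
    rw [Submodule.ker_orthogonalProjectionOnto_orthogonal, hXc.submodule_topologicalClosure_eq]
  have hsection : Function.RightInverse Xᗮ.subtypeL Q :=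
    Submodule.orthogonalProjectionOnto_mem_subspace_eq_self
  have hiff := Q.isFredholmPair_ker_iff_isFredholmOp_comp_subtypeL Y hsection
  have hindex := Q.fpIndex_ker_eq_opIndex_comp_subtypeL Y hsection.surjective
  subst hP
  rw [hker] at hiff hindex
  exact ⟨hiff, fun _ ↦ ⟨hindex, rfl⟩⟩

theorem stmt9 {H : Type*} [NormedAddCommGroup H] [InnerProductSpace ℂ H] [CompleteSpace H]
    (X Y : Submodule ℂ H) (hXc : IsClosed (X : Set H)) (hYc : IsClosed (Y : Set H))
    (P : ↥Y →L[ℂ] ↥Xᗮ) (hP : P = (Submodule.orthogonalProjectionOnto Xᗮ).comp Y.subtypeL) :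
    (IsFredholmPair X Y ↔ IsFredholmOp P) ∧
    (IsFredholmPair X Y →
      fpIndex X Y = opIndex P ∧
      opIndex P = (finrank ℂ (LinearMap.ker (P : ↥Y →ₗ[ℂ] ↥Xᗮ)) : ℤ) -
        (finrank ℂ (↥Xᗮ ⧸ LinearMap.range (P : ↥Y →ₗ[ℂ] ↥Xᗮ)) : ℤ)) :=
  stmt9_general X Y hXc P hP
end

section
/- Let X₁, X₂ and V be complex Hilbert spaces and let j : X₁ → X₂ be an injective bounded linear map; let ι := j × id_V : X₁ × V → X₂ × V. Let B be a closed subspace of the product Hilbert space X₁ × V such that ι(B) is closed in X₂ × V. Then (X₁ × {0}, B) is a Fredholm pair in X₁ × V if and only if (X₂ × {0}, ι(B)) is a Fredholm pair in X₂ × V, and in that case ind(X₁ × {0}, B) = ind(X₂ × {0}, ι(B)). -/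
/-!
Everything is read off from the projection `π : X × V → V`. For any `B`, the sum
`X × 0 + B` is `X × π(B)`, so it is closed iff `π(B)` is, and its cokernel is `V ⧸ π(B)`;
and `π(ι(B)) = π(B)`. The intersections `X₁ × 0 ∩ B` and `X₂ × 0 ∩ ι(B)` correspond
under `ι`, which is injective. Thus the two pairs have the same three Fredholm data.
-/

open Module

namespace Submodule

section Ring

variable {R M N M' : Type*} [Ring R] [AddCommGroup M] [Module R M] [AddCommGroup N] [Module R N]
  [AddCommGroup M'] [Module R M']

theorem top_prod_bot_sup (B : Submodule R (M × N)) :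
    (⊤ : Submodule R M).prod ⊥ ⊔ B = (⊤ : Submodule R M).prod (B.map (LinearMap.snd R M N)) := by
  rw [← comap_snd, ← comap_snd, comap_map_eq, sup_comm]
  rfl

theorem map_snd_map_prodMap_id (f : M →ₗ[R] M') (B : Submodule R (M × N)) :
    (B.map (f.prodMap LinearMap.id)).map (LinearMap.snd R M' N) = B.map (LinearMap.snd R M N) := by
  rw [← map_comp]
  rfl

theorem top_prod_bot_inf_map_prodMap_id (f : M →ₗ[R] M') (B : Submodule R (M × N)) :
    (⊤ : Submodule R M').prod ⊥ ⊓ B.map (f.prodMap LinearMap.id) =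
      ((⊤ : Submodule R M).prod ⊥ ⊓ B).map (f.prodMap LinearMap.id) := by
  rw [inf_comm, map_inf_eq_map_inf_comap, inf_comm]
  congr 2

noncomputable def quotTopProdEquiv (Q : Submodule R N) :
    ((M × N) ⧸ (⊤ : Submodule R M).prod Q) ≃ₗ[R] N ⧸ Q :=
  (quotEquivOfEq _ _ (by rw [LinearMap.ker_comp, ker_mkQ, comap_snd])).trans
    ((Q.mkQ.comp (LinearMap.snd R M N)).quotKerEquivOfSurjective
      (Q.mkQ_surjective.comp LinearMap.snd_surjective))

end Ring

theorem isClosed_top_prod_iff {R M N : Type*} [Semiring R] [AddCommMonoid M] [Module R M]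
    [TopologicalSpace M] [AddCommMonoid N] [Module R N] [TopologicalSpace N] (Q : Submodule R N) :
    IsClosed (((⊤ : Submodule R M).prod Q : Submodule R (M × N)) : Set (M × N)) ↔
      IsClosed (Q : Set N) := by
  rw [← comap_snd]
  exact ⟨fun h ↦ h.preimage (continuous_const.prodMk continuous_id :
      Continuous fun v : N ↦ ((0 : M), v)), fun h ↦ h.preimage continuous_snd⟩

end Submodule

open Submodule

section FredholmPair

variable {X V : Type*} [NormedAddCommGroup X] [NormedSpace ℂ X] [NormedAddCommGroup V]
  [NormedSpace ℂ V]

theorem isFredholmPair_top_prod_bot_iff (B : Submodule ℂ (X × V)) :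
    IsFredholmPair ((⊤ : Submodule ℂ X).prod ⊥) B ↔
      FiniteDimensional ℂ ↥((⊤ : Submodule ℂ X).prod ⊥ ⊓ B) ∧
        IsClosed (B.map (LinearMap.snd ℂ X V) : Set V) ∧
          FiniteDimensional ℂ (V ⧸ B.map (LinearMap.snd ℂ X V)) := by
  rw [IsFredholmPair, top_prod_bot_sup, isClosed_top_prod_iff]
  exact and_congr_right' (and_congr_right' (Module.Finite.equiv_iff (quotTopProdEquiv _)))

theorem fpIndex_top_prod_bot (B : Submodule ℂ (X × V)) :
    fpIndex ((⊤ : Submodule ℂ X).prod ⊥) B =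
      finrank ℂ ↥((⊤ : Submodule ℂ X).prod ⊥ ⊓ B) -
        finrank ℂ (V ⧸ B.map (LinearMap.snd ℂ X V)) := by
  rw [fpIndex, top_prod_bot_sup, (quotTopProdEquiv _).finrank_eq]

end FredholmPair

theorem stmt11_general {X₁ X₂ V : Type*}
    [NormedAddCommGroup X₁] [InnerProductSpace ℂ X₁]
    [NormedAddCommGroup X₂] [InnerProductSpace ℂ X₂]
    [NormedAddCommGroup V] [InnerProductSpace ℂ V]
    (j : X₁ →L[ℂ] X₂) (hj : Function.Injective j)
    (ι : X₁ × V →L[ℂ] X₂ × V) (hι : ι = j.prodMap (ContinuousLinearMap.id ℂ V))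
    (B : Submodule ℂ (X₁ × V)) :
    (IsFredholmPair ((⊤ : Submodule ℂ X₁).prod (⊥ : Submodule ℂ V)) B ↔
      IsFredholmPair ((⊤ : Submodule ℂ X₂).prod (⊥ : Submodule ℂ V)) (B.map (ι : X₁ × V →ₗ[ℂ] X₂ × V))) ∧
    (IsFredholmPair ((⊤ : Submodule ℂ X₁).prod (⊥ : Submodule ℂ V)) B →
      fpIndex ((⊤ : Submodule ℂ X₁).prod (⊥ : Submodule ℂ V)) B =
        fpIndex ((⊤ : Submodule ℂ X₂).prod (⊥ : Submodule ℂ V)) (B.map (ι : X₁ × V →ₗ[ℂ] X₂ × V))) := by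
  subst hι
  rw [ContinuousLinearMap.coe_prodMap, ContinuousLinearMap.coe_id]
  have hinj : Function.Injective ((j : X₁ →ₗ[ℂ] X₂).prodMap (LinearMap.id : V →ₗ[ℂ] V)) :=
    hj.prodMap Function.injective_id
  let e := (equivMapOfInjective _ hinj ((⊤ : Submodule ℂ X₁).prod ⊥ ⊓ B)).trans
    (LinearEquiv.ofEq _ _ (top_prod_bot_inf_map_prodMap_id _ B).symm)
  rw [isFredholmPair_top_prod_bot_iff, isFredholmPair_top_prod_bot_iff, fpIndex_top_prod_bot,
    fpIndex_top_prod_bot, map_snd_map_prodMap_id, e.finrank_eq]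
  exact ⟨and_congr_left' (Module.Finite.equiv_iff e), fun _ ↦ rfl⟩

theorem stmt11 {X₁ X₂ V : Type*}
    [NormedAddCommGroup X₁] [InnerProductSpace ℂ X₁] [CompleteSpace X₁]
    [NormedAddCommGroup X₂] [InnerProductSpace ℂ X₂] [CompleteSpace X₂]
    [NormedAddCommGroup V] [InnerProductSpace ℂ V] [CompleteSpace V]
    (j : X₁ →L[ℂ] X₂) (hj : Function.Injective j)
    (ι : X₁ × V →L[ℂ] X₂ × V) (hι : ι = j.prodMap (ContinuousLinearMap.id ℂ V))
    (B : Submodule ℂ (X₁ × V)) (hBc : IsClosed (B : Set (X₁ × V)))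
    (hιB : IsClosed ((B.map (ι : X₁ × V →ₗ[ℂ] X₂ × V) : Submodule ℂ (X₂ × V)) : Set (X₂ × V))) :
    (IsFredholmPair ((⊤ : Submodule ℂ X₁).prod (⊥ : Submodule ℂ V)) B ↔
      IsFredholmPair ((⊤ : Submodule ℂ X₂).prod (⊥ : Submodule ℂ V)) (B.map (ι : X₁ × V →ₗ[ℂ] X₂ × V))) ∧
    (IsFredholmPair ((⊤ : Submodule ℂ X₁).prod (⊥ : Submodule ℂ V)) B →
      fpIndex ((⊤ : Submodule ℂ X₁).prod (⊥ : Submodule ℂ V)) B =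
        fpIndex ((⊤ : Submodule ℂ X₂).prod (⊥ : Submodule ℂ V)) (B.map (ι : X₁ × V →ₗ[ℂ] X₂ × V))) :=
  stmt11_general j hj ι hι B
end

section
/- Let H be a complex Hilbert space, (e_i)_{i∈ι} a Hilbert (orthonormal) basis of H, and λ : ι → ℝ a function such that {i ∈ ι : a ≤ λ(i) ≤ b} is finite for all real a ≤ b. For S ⊆ ℝ let H_S denote the closed linear span of {e_i : λ(i) ∈ S}. Then for every a ∈ ℝ, both (H_{[0,∞)}, H_{(−∞,a)}) and (H_{(−∞,0)}, H_{[a,∞)}) are Fredholm pairs in H, and ind(H_{[0,∞)}, H_{(−∞,a)}) = card{i : 0 ≤ λ(i) < a} − card{i : a ≤ λ(i) < 0} = −ind(H_{(−∞,0)}, H_{[a,∞)}). -/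
open Module

/-- The closed subspace spanned by the basis vectors `e i` with `λ i ∈ S`. -/
def spectralSubspace {ι H : Type*} [NormedAddCommGroup H] [InnerProductSpace ℂ H]
    [CompleteSpace H] (b : HilbertBasis ι ℂ H) (lam : ι → ℝ) (S : Set ℝ) : Submodule ℂ H :=
  (Submodule.span ℂ (⇑b '' {i | lam i ∈ S})).topologicalClosure

local notation "⟪" x ", " y "⟫" => @inner ℂ _ _ x y

namespace APSAux

variable {ι H : Type*} [NormedAddCommGroup H] [InnerProductSpace ℂ H] [CompleteSpace H]

noncomputable def V (b : HilbertBasis ι ℂ H) (J : Set ι) : Submodule ℂ H :=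
  (Submodule.span ℂ (⇑b '' J)).topologicalClosure

variable (b : HilbertBasis ι ℂ H)

lemma isClosed_V (J : Set ι) : IsClosed ((V b J : Set H)) :=
  Submodule.isClosed_topologicalClosure _

lemma basis_mem_V {J : Set ι} {i : ι} (hi : i ∈ J) : b i ∈ V b J :=
  Submodule.le_topologicalClosure _ (Submodule.subset_span ⟨i, hi, rfl⟩)

lemma mem_of_hasSum {p : Submodule ℂ H} (hp : IsClosed (p : Set H)) {α : Type*} {f : α → H}
    (hf : ∀ i, f i ∈ p) {x : H} (h : HasSum f x) : x ∈ p :=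
  hp.mem_of_tendsto h (Filter.Eventually.of_forall fun s => Submodule.sum_mem _ fun i _ => hf i)

lemma mem_V_iff {J : Set ι} {x : H} : x ∈ V b J ↔ ∀ i ∉ J, ⟪b i, x⟫ = 0 := by
  constructor
  · intro hx i hi
    have hker : Submodule.span ℂ (⇑b '' J) ≤ (innerSL ℂ (b i)).ker := by
      rw [Submodule.span_le]
      rintro _ ⟨j, hj, rfl⟩
      have hij : i ≠ j := fun h => hi (h ▸ hj)
      simpa [LinearMap.mem_ker] using b.orthonormal.2 hij
    exact Submodule.topologicalClosure_minimal _ hker (ContinuousLinearMap.isClosed_ker _) hx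
  · intro hx
    refine mem_of_hasSum (isClosed_V b J) (fun i => ?_) (b.hasSum_repr x)
    by_cases hi : i ∈ J
    · exact Submodule.smul_mem _ _ (basis_mem_V b hi)
    · have : b.repr x i = 0 := by rw [b.repr_apply_apply]; exact hx i hi
      simp [this]

lemma V_mono {J K : Set ι} (h : J ⊆ K) : V b J ≤ V b K :=
  Submodule.topologicalClosure_mono (Submodule.span_mono (Set.image_mono h))

lemma V_inf (J K : Set ι) : V b J ⊓ V b K = V b (J ∩ K) := by
  ext x
  simp only [Submodule.mem_inf, mem_V_iff, Set.mem_inter_iff, not_and_or]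
  constructor
  · rintro ⟨h1, h2⟩ i (hi | hi)
    · exact h1 i hi
    · exact h2 i hi
  · intro h
    exact ⟨fun i hi => h i (Or.inl hi), fun i hi => h i (Or.inr hi)⟩

lemma V_sup (J K : Set ι) : V b J ⊔ V b K = V b (J ∪ K) := by
  refine le_antisymm (sup_le (V_mono b Set.subset_union_left) (V_mono b Set.subset_union_right)) ?_
  intro x hx
  set f : ι → H := fun i => b.repr x i • b i with hf
  have hsum : HasSum f x := b.hasSum_repr x
  have hsub : Summable (f ∘ ((↑) : J → ι)) := hsum.summable.subtype J
  have hsub' : Summable (f ∘ ((↑) : ↥Jᶜ → ι)) := hsum.summable.subtype Jᶜ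
  have hdecomp : (∑' i : J, f i) + ∑' i : ↥Jᶜ, f i = x := by
    rw [hsum.summable.tsum_subtype_add_tsum_subtype_compl J, hsum.tsum_eq]
  have h1 : (∑' i : J, f i) ∈ V b J := by
    refine mem_of_hasSum (isClosed_V b J) (fun i => ?_) hsub.hasSum
    exact Submodule.smul_mem _ _ (basis_mem_V b i.2)
  have h2 : (∑' i : ↥Jᶜ, f i) ∈ V b K := by
    refine mem_of_hasSum (isClosed_V b K) (fun i => ?_) hsub'.hasSum
    by_cases hiK : (i : ι) ∈ K
    · exact Submodule.smul_mem _ _ (basis_mem_V b hiK)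
    · have hiJK : (i : ι) ∉ J ∪ K := by
        rintro (h | h)
        · exact i.2 h
        · exact hiK h
      have : b.repr x (i : ι) = 0 := by
        rw [b.repr_apply_apply]; exact (mem_V_iff b).mp hx _ hiJK
      simp [hf, this]
  rw [← hdecomp]
  exact Submodule.add_mem_sup h1 h2

lemma V_orthogonal (J : Set ι) : (V b J)ᗮ = V b Jᶜ := by
  ext x
  rw [Submodule.mem_orthogonal, mem_V_iff]
  constructor
  · intro h i hi
    rw [Set.notMem_compl_iff] at hi
    exact h _ (basis_mem_V b hi)
  · intro h u hu
    rw [inner_eq_zero_symm]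
    have hker : Submodule.span ℂ (⇑b '' J) ≤ (innerSL ℂ x).ker := by
      rw [Submodule.span_le]
      rintro _ ⟨j, hj, rfl⟩
      have : ⟪b j, x⟫ = 0 := h j (by simpa using hj)
      simpa [LinearMap.mem_ker, inner_eq_zero_symm] using this
    exact Submodule.topologicalClosure_minimal _ hker (ContinuousLinearMap.isClosed_ker _) hu

lemma V_eq_span_of_finite {J : Set ι} (h : J.Finite) :
    V b J = Submodule.span ℂ (⇑b '' J) := by
  haveI : FiniteDimensional ℂ (Submodule.span ℂ (⇑b '' J)) :=
    FiniteDimensional.span_of_finite ℂ (h.image b)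
  exact (Submodule.closed_of_finiteDimensional _).submodule_topologicalClosure_eq

lemma finiteDimensional_V {J : Set ι} (h : J.Finite) : FiniteDimensional ℂ (V b J) := by
  rw [V_eq_span_of_finite b h]
  exact FiniteDimensional.span_of_finite ℂ (h.image b)

lemma finrank_V {J : Set ι} (h : J.Finite) : finrank ℂ (V b J) = J.ncard := by
  have hinj : Function.Injective b := b.orthonormal.linearIndependent.injective
  have hli : LinearIndependent ℂ ((↑) : (⇑b '' J) → H) :=
    b.orthonormal.linearIndependent.linearIndepOn_id.mono (Set.image_subset_range _ _)
  have hV := V_eq_span_of_finite b h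
  haveI : Fintype (⇑b '' J) := (h.image b).fintype
  rw [hV, finrank_span_set_eq_card hli]
  rw [← Set.ncard_eq_toFinset_card', Set.ncard_image_of_injective _ hinj]

end APSAux

namespace APSAux2
open APSAux

variable {ι H : Type*} [NormedAddCommGroup H] [InnerProductSpace ℂ H] [CompleteSpace H]
  (b : HilbertBasis ι ℂ H)

lemma quotient_V {J : Set ι} (h : Jᶜ.Finite) :
    FiniteDimensional ℂ (H ⧸ V b J) ∧ finrank ℂ (H ⧸ V b J) = Jᶜ.ncard := by
  haveI : CompleteSpace (V b J) := (isClosed_V b J).completeSpace_coe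
  have hc : IsCompl (V b J) (V b J)ᗮ := Submodule.isCompl_orthogonal_of_hasOrthogonalProjection
  let e : (H ⧸ V b J) ≃ₗ[ℂ] V b Jᶜ :=
    (Submodule.quotientEquivOfIsCompl _ _ hc).trans (LinearEquiv.ofEq _ _ (V_orthogonal b J))
  haveI : FiniteDimensional ℂ (V b Jᶜ) := finiteDimensional_V b h
  haveI : FiniteDimensional ℂ (H ⧸ V b J) := LinearEquiv.finiteDimensional e.symm
  exact ⟨inferInstance, by rw [e.finrank_eq, finrank_V b h]⟩

end APSAux2

namespace APSAux

variable {ι H : Type*} [NormedAddCommGroup H] [InnerProductSpace ℂ H] [CompleteSpace H]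
  (b : HilbertBasis ι ℂ H)

lemma fredholm_V (J K : Set ι) (h1 : (J ∩ K).Finite) (h2 : ((J ∪ K)ᶜ).Finite) :
    IsFredholmPair (V b J) (V b K) ∧
      fpIndex (V b J) (V b K) = ((J ∩ K).ncard : ℤ) - (((J ∪ K)ᶜ).ncard : ℤ) := by
  have hinf := V_inf b J K
  have hsup := V_sup b J K
  have hq := APSAux2.quotient_V b (J := J ∪ K) h2
  refine ⟨⟨?_, ?_, ?_⟩, ?_⟩
  · rw [hinf]; exact finiteDimensional_V b h1
  · rw [hsup]; exact isClosed_V b _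
  · rw [hsup]; exact hq.1
  · rw [fpIndex, hinf, hsup, finrank_V b h1, hq.2]

end APSAux

theorem stmt12 {ι H : Type*} [NormedAddCommGroup H] [InnerProductSpace ℂ H] [CompleteSpace H]
    (b : HilbertBasis ι ℂ H) (lam : ι → ℝ)
    (hfin : ∀ a c : ℝ, a ≤ c → {i | a ≤ lam i ∧ lam i ≤ c}.Finite) :
    ∀ a : ℝ,
      IsFredholmPair (spectralSubspace b lam (Set.Ici 0)) (spectralSubspace b lam (Set.Iio a)) ∧
      IsFredholmPair (spectralSubspace b lam (Set.Iio 0)) (spectralSubspace b lam (Set.Ici a)) ∧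
      fpIndex (spectralSubspace b lam (Set.Ici 0)) (spectralSubspace b lam (Set.Iio a)) =
        ({i | 0 ≤ lam i ∧ lam i < a}.ncard : ℤ) - ({i | a ≤ lam i ∧ lam i < 0}.ncard : ℤ) ∧
      fpIndex (spectralSubspace b lam (Set.Ici 0)) (spectralSubspace b lam (Set.Iio a)) =
        -fpIndex (spectralSubspace b lam (Set.Iio 0)) (spectralSubspace b lam (Set.Ici a)) := by
  classical
  intro a
  set P : Set ι := {i | lam i ∈ Set.Ici (0:ℝ)} with hP
  set Q : Set ι := {i | lam i ∈ Set.Iio a} with hQ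
  set P' : Set ι := {i | lam i ∈ Set.Iio (0:ℝ)} with hP'
  set Q' : Set ι := {i | lam i ∈ Set.Ici a} with hQ'
  have hfin1 : {i | 0 ≤ lam i ∧ lam i < a}.Finite :=
    (hfin 0 (max 0 a) (le_max_left _ _)).subset
      (fun i hi => ⟨hi.1, le_trans hi.2.le (le_max_right _ _)⟩)
  have hfin2 : {i | a ≤ lam i ∧ lam i < 0}.Finite :=
    (hfin (min a 0) 0 (min_le_right _ _)).subset
      (fun i hi => ⟨le_trans (min_le_left _ _) hi.1, hi.2.le⟩)
  have hint : P ∩ Q = {i | 0 ≤ lam i ∧ lam i < a} := by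
    ext i; simp [hP, hQ, Set.mem_Ici, Set.mem_Iio]
  have hunc : (P ∪ Q)ᶜ = {i | a ≤ lam i ∧ lam i < 0} := by
    ext i
    simp only [hP, hQ, Set.mem_compl_iff, Set.mem_union, Set.mem_setOf_eq, Set.mem_Ici,
      Set.mem_Iio, not_or, not_le, not_lt]
    exact and_comm
  have hint' : P' ∩ Q' = {i | a ≤ lam i ∧ lam i < 0} := by
    ext i
    simp only [hP', hQ', Set.mem_inter_iff, Set.mem_setOf_eq, Set.mem_Ici, Set.mem_Iio]
    try exact and_comm
  have hunc' : (P' ∪ Q')ᶜ = {i | 0 ≤ lam i ∧ lam i < a} := by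
    ext i
    simp only [hP', hQ', Set.mem_compl_iff, Set.mem_union, Set.mem_setOf_eq, Set.mem_Ici,
      Set.mem_Iio, not_or, not_le, not_lt]
    try exact and_comm
  have F1 := APSAux.fredholm_V b P Q (by rw [hint]; exact hfin1) (by rw [hunc]; exact hfin2)
  have F2 := APSAux.fredholm_V b P' Q' (by rw [hint']; exact hfin2) (by rw [hunc']; exact hfin1)
  rw [hint, hunc] at F1
  rw [hint', hunc'] at F2
  refine ⟨F1.1, F2.1, F1.2, ?_⟩
  show fpIndex (APSAux.V b P) (APSAux.V b Q) = -fpIndex (APSAux.V b P') (APSAux.V b Q')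
  rw [F1.2, F2.2]; ring
end
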